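/- arXiv:1507.07309 — 2 statements merged into one kernel-verified Lean document; each statement's English description precedes it below -/
import Mathlib

section
/- Let p be an odd prime, F⁺ a totally real number field in which p is unramified (every prime of the ring of integers 𝓞_{F⁺} lying above p has ramification index 1 over pℤ), and F a totally imaginary quadratic extension of F⁺ such that every prime of F⁺ lying above p splits completely in F. Then the index of the image of the unit group 𝓞_{F⁺}^× inside the unit group 𝓞_F^× is finite and is not divisible by p. -/
/-!
The map `u ↦ u / c(u)`, with `c` the complex conjugation of `F/F⁺`, sends `𝓞_Fˣ` into the
roots of unity `μ(F)` with kernel the image of `𝓞_{F⁺}ˣ`, so the index divides `|μ(F)|`.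
If `p` divided `|μ(F)|`, then `F` would contain a primitive `p`-th root of unity `ζ`, and since
`p = (ζ - 1) ^ (p - 1)` up to a unit, every prime of `F` above `p` would have ramification index
at least `p - 1 ≥ 2` over `ℚ`. But a prime of `F` lying over a prime of `F⁺` above `p` that
splits in `F` has ramification index `1` over `ℚ`, as `p` is unramified in `F⁺`.
-/

open NumberField Ideal

theorem IsPrimitiveRoot.ramificationIdx'_ne_one {K : Type*} [Field K] {p : ℕ}
    [hp : Fact p.Prime] (hp2 : p ≠ 2) {ζ : K} (hζ : IsPrimitiveRoot ζ p) (Q : Ideal (𝓞 K))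
    [hQ : Q.IsPrime] : (span {(p : ℤ)}).ramificationIdx' Q ≠ 1 := by
  have hmap : map (algebraMap ℤ (𝓞 K)) (span {(p : ℤ)}) = span {(p : 𝓞 K)} := by
    simp [map_span]
  by_cases hpQ : (p : 𝓞 K) ∈ Q
  · rw [ramificationIdx'_ne_one_iff (by rwa [hmap, span_singleton_le_iff_mem]), hmap,
      span_singleton_le_iff_mem]
    obtain ⟨u, hu⟩ := IsCyclotomicExtension.Rat.associated_zeta_sub_one_pow_prime p hζ
    have hsub : hζ.toInteger - 1 ∈ Q := by
      refine hQ.mem_of_pow_mem (p - 1) ?_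
      rw [(_root_.Units.eq_mul_inv_iff_mul_eq u).mpr hu]
      exact Q.mul_mem_right _ hpQ
    rw [← hu]
    refine pow_le_pow_right (n := p - 1) (by have := hp.out.two_le; omega) ?_
    exact (Q ^ (p - 1)).mul_mem_right _ (pow_mem_pow hsub _)
  · rw [ramificationIdx'_of_not_le (by rwa [hmap, span_singleton_le_iff_mem])]
    exact zero_ne_one

namespace NumberField

variable {K : Type*} [Field K] [NumberField K]

theorem Units.exists_isPrimitiveRoot_of_dvd_torsionOrder {n : ℕ} (hn : n ∣ torsionOrder K) :
    ∃ ζ : K, IsPrimitiveRoot ζ n := by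
  obtain ⟨μ, hμ⟩ : ∃ μ : torsion K, orderOf μ = torsionOrder K :=
    IsCyclic.exists_ofOrder_eq_natCard
  rw [← IsPrimitiveRoot.iff_orderOf, ← IsPrimitiveRoot.coe_submonoidClass_iff,
    ← IsPrimitiveRoot.coe_units_iff] at hμ
  replace hμ := hμ.map_of_injective (FaithfulSMul.algebraMap_injective (𝓞 K) K)
  obtain ⟨m, hm⟩ := hn
  exact ⟨_, hμ.pow (torsionOrder_pos K) (hm.trans (mul_comm _ _))⟩

theorem Units.not_dvd_torsionOrder_of_ramificationIdx'_eq_one {p : ℕ} [Fact p.Prime]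
    (hp2 : p ≠ 2) (Q : Ideal (𝓞 K)) [Q.IsPrime] (hQ : (span {(p : ℤ)}).ramificationIdx' Q = 1) :
    ¬ p ∣ torsionOrder K := fun hdvd ↦
  have ⟨_, hζ⟩ := exists_isPrimitiveRoot_of_dvd_torsionOrder hdvd
  hζ.ramificationIdx'_ne_one hp2 Q hQ

theorem IsCMField.index_realUnits_dvd_torsionOrder (K : Type*) [Field K] [NumberField K]
    [IsCMField K] : (realUnits K).index ∣ Units.torsionOrder K := by
  rw [← unitsMulComplexConjInv_ker, Subgroup.index_ker]
  exact Subgroup.card_subgroup_dvd_card _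

theorem CMExtension.range_unitsMap_eq_realUnits (F : Type*) [Field F] [IsTotallyReal F]
    [IsTotallyComplex K] [Algebra F K] [Algebra.IsQuadraticExtension F K] :
    (_root_.Units.map (algebraMap (𝓞 F) (𝓞 K)).toMonoidHom).range = IsCMField.realUnits K := by
  let e : 𝓞 F ≃+* 𝓞 (maximalRealSubfield K) :=
    RingOfIntegers.mapRingEquiv (equivMaximalRealSubfield F K)
  have hcomp : (algebraMap (𝓞 (maximalRealSubfield K)) (𝓞 K)).comp (e : 𝓞 F →+* _) =
      algebraMap (𝓞 F) (𝓞 K) := by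
    ext x
    exact equivMaximalRealSubfield_apply F K x
  have he : Function.Surjective (_root_.Units.map e.toMonoidHom) :=
    fun u ↦ ⟨_root_.Units.map e.symm.toMonoidHom u, by ext; simp⟩
  rw [← hcomp]
  change (_root_.Units.map ((algebraMap _ (𝓞 K)).toMonoidHom.comp e.toMonoidHom)).range = _
  rw [_root_.Units.map_comp, MonoidHom.range_comp, MonoidHom.range_eq_top.mpr he,
    ← MonoidHom.range_eq_map]
  rfl

theorem exists_isPrime_ramificationIdx'_eq_one {L : Type*} [Field L] [NumberField L]
    [Algebra K L] {p : ℕ} [Fact p.Prime]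
    (hK : ∀ P : Ideal (𝓞 K), P.IsPrime → (p : 𝓞 K) ∈ P →
      (span {(p : ℤ)}).ramificationIdx' P = 1)
    (hL : ∀ P : Ideal (𝓞 K), P.IsPrime → (p : 𝓞 K) ∈ P → ∃ Q : Ideal (𝓞 L), Q.IsPrime ∧
      map (algebraMap (𝓞 K) (𝓞 L)) P ≤ Q ∧ P.ramificationIdx' Q = 1) :
    ∃ Q : Ideal (𝓞 L), Q.IsPrime ∧ (span {(p : ℤ)}).ramificationIdx' Q = 1 := by
  obtain ⟨P, hPmax, _⟩ := exists_maximal_ideal_liesOver_of_isIntegral (S := 𝓞 K) (span {(p : ℤ)})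
  have hpP : (p : 𝓞 K) ∈ P := by
    simpa using (mem_of_liesOver P _ (p : ℤ)).mp (mem_span_singleton_self _)
  obtain ⟨Q, hQ, hPQ, heQ⟩ := hL P hPmax.isPrime hpP
  refine ⟨Q, hQ, ?_⟩
  have hp0 : (p : ℤ) ≠ 0 := Int.natCast_ne_zero.mpr (Fact.out : p.Prime).ne_zero
  have hP0 : P ≠ ⊥ := fun h ↦ hp0 (by simpa [h] using hpP)
  rw [ramificationIdx'_algebra_tower (P := P) (map_ne_bot_of_ne_bot hP0)
    (map_ne_bot_of_ne_bot (by simpa using hp0)) hPQ, hK P hPmax.isPrime hpP, heQ]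

end NumberField

/-- Let `p` be an odd prime, `F⁺` a totally real number field in which `p` is unramified, and
`F` a totally imaginary quadratic extension of `F⁺` in which every prime of `F⁺` above `p`
splits completely.  Then the index of the image of `𝓞_{F⁺}ˣ` in `𝓞_Fˣ` is finite and prime
to `p`. -/
theorem unit_index_finite_and_prime_to_p
    (p : ℕ) (hp : p.Prime) (hodd : Odd p)
    (Fplus F : Type*) [Field Fplus] [NumberField Fplus] [Field F] [NumberField F]
    [Algebra Fplus F]
    -- `F⁺` is totally real
    (htr : ∀ v : InfinitePlace Fplus, v.IsReal)
    -- `F` is a quadratic extension of `F⁺`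
    (hquad : Module.finrank Fplus F = 2)
    -- `F` is totally imaginary
    (hti : ∀ v : InfinitePlace F, v.IsComplex)
    -- `p` is unramified in `F⁺`: every prime of `𝓞_{F⁺}` above `p` has ramification index 1
    -- over `pℤ`
    (hunr : ∀ P : Ideal (𝓞 Fplus), P.IsPrime → (p : 𝓞 Fplus) ∈ P →
      Ideal.ramificationIdx' (Ideal.span {(p : ℤ)}) P = 1)
    -- every prime of `F⁺` above `p` splits completely in `F`
    (hsplit : ∀ P : Ideal (𝓞 Fplus), P.IsPrime → (p : 𝓞 Fplus) ∈ P →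
      ∃ Q₁ Q₂ : Ideal (𝓞 F), Q₁ ≠ Q₂ ∧ Q₁.IsPrime ∧ Q₂.IsPrime ∧
        Ideal.map (algebraMap (𝓞 Fplus) (𝓞 F)) P = Q₁ * Q₂ ∧
        Ideal.ramificationIdx' P Q₁ = 1 ∧
        Ideal.ramificationIdx' P Q₂ = 1 ∧
        Ideal.inertiaDeg' P Q₁ = 1 ∧
        Ideal.inertiaDeg' P Q₂ = 1) :
    (Units.map (algebraMap (𝓞 Fplus) (𝓞 F)).toMonoidHom).range.index ≠ 0 ∧
      ¬ p ∣ (Units.map (algebraMap (𝓞 Fplus) (𝓞 F)).toMonoidHom).range.index := by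
  have : Fact p.Prime := ⟨hp⟩
  have : IsTotallyReal Fplus := ⟨htr⟩
  have : IsTotallyComplex F := ⟨hti⟩
  have : Algebra.IsQuadraticExtension Fplus F := { finrank_eq_two' := hquad }
  have := IsCMField.ofCMExtension Fplus F
  obtain ⟨Q, hQ, he⟩ := exists_isPrime_ramificationIdx'_eq_one (L := F) hunr fun P hP hpP ↦
    have ⟨Q₁, _, _, hQ₁, _, hPQ, he₁, _⟩ := hsplit P hP hpP
    ⟨Q₁, hQ₁, hPQ ▸ mul_le_left, he₁⟩
  have hdvd := IsCMField.index_realUnits_dvd_torsionOrder F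
  rw [CMExtension.range_unitsMap_eq_realUnits Fplus]
  exact ⟨ne_zero_of_dvd_ne_zero (Units.torsionOrder_ne_zero F) hdvd, fun hp ↦
    Units.not_dvd_torsionOrder_of_ramificationIdx'_eq_one (by rintro rfl; norm_num at hodd) Q he
      (hp.trans hdvd)⟩
end

section
/- Let K be a field of characteristic different from 2, G a group, ρ : G → GL₂(K) a group homomorphism into the group of invertible 2×2 matrices over K, ν : G → K^× a group homomorphism, and M ∈ GL₂(K). Assume that ρ(g) = ν(g) · (M ρ(g) M^{-1}) holds for every g ∈ G (where ν(g)·A denotes the scalar multiple of the matrix A), and that there exists g₀ ∈ G with ν(g₀) = −1. Then the image under ρ of the kernel of ν is a commutative subgroup of GL₂(K): ρ(h₁)ρ(h₂) = ρ(h₂)ρ(h₁) for all h₁, h₂ in ker ν. -/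
open scoped MatrixGroups

/-!
Put `A = ρ g` for `g ∈ ker ν` and `T = ρ g₀`. The hypothesis says `A M = M A` and `T M = -M T`.
Since `2 ≠ 0` and `T` is invertible, the second relation forbids `M` from being a scalar matrix.
The centraliser of a non-scalar `2 × 2` matrix `M` is `K[M] = K + K M`, which is commutative.
-/

theorem Units.mul_eq_smul_mul_of_eq_smul_conj {R α : Type*} [Monoid α] [SMul R α]
    [IsScalarTower R α α] (u : αˣ) {a : α} {c : R} (h : a = c • (u * a * ↑u⁻¹)) :
    a * u = c • (u * a) := by
  nth_rewrite 1 [h]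
  rw [smul_mul_assoc, Units.inv_mul_cancel_right]

theorem notMem_range_algebraMap_of_mul_eq_neg_mul {K A : Type*} [Field K] [Ring A]
    [Nontrivial A] [Algebra K A] (h2 : (2 : K) ≠ 0) {M T : A} (hM : IsUnit M) (hT : IsUnit T)
    (hanti : T * M = -(M * T)) : M ∉ Set.range (algebraMap K A) := by
  rintro ⟨c, rfl⟩
  have htwice : (2 : K) • (algebraMap K A c * T) = 0 := by
    rw [two_smul]
    nth_rewrite 1 [Algebra.commutes c T]
    rw [hanti, neg_add_cancel]
  exact (hM.mul hT).ne_zero ((smul_eq_zero.mp htwice).resolve_left h2)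

namespace Matrix

variable {K : Type*} [Field K]

theorem exists_eq_algebraMap_add_smul_of_commute {M A : Matrix (Fin 2) (Fin 2) K}
    (hM : M ∉ Set.range (algebraMap K _)) (hA : Commute A M) :
    ∃ α β : K, A = algebraMap K _ α + β • M := by
  have e00 := congrFun (congrFun hA.eq 0) 0
  have e01 := congrFun (congrFun hA.eq 0) 1
  have e10 := congrFun (congrFun hA.eq 1) 0
  simp only [mul_apply, Fin.sum_univ_two] at e00 e01 e10
  have hnonscalar : ¬(M 0 1 = 0 ∧ M 1 0 = 0 ∧ M 0 0 - M 1 1 = 0) := by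
    rintro ⟨h01, h10, hdiag⟩
    refine hM ⟨M 0 0, ?_⟩
    ext i j
    fin_cases i <;> fin_cases j <;> simp [algebraMap_eq_diagonal, h01, h10, sub_eq_zero.mp hdiag]
  -- `(A 0 1, A 1 0, A 0 0 - A 1 1)` and `(M 0 1, M 1 0, M 0 0 - M 1 1)` have zero cross product.
  obtain ⟨β, h01, h10, hdiag⟩ : ∃ β : K, A 0 1 = β * M 0 1 ∧ A 1 0 = β * M 1 0 ∧
      A 0 0 - A 1 1 = β * (M 0 0 - M 1 1) := by
    by_cases hb : M 0 1 = 0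
    · by_cases hc : M 1 0 = 0
      · have hd : M 0 0 - M 1 1 ≠ 0 := fun hd => hnonscalar ⟨hb, hc, hd⟩
        refine ⟨(A 0 0 - A 1 1) / (M 0 0 - M 1 1), ?_, ?_, by field_simp⟩
        · field_simp; rw [hb] at e01 ⊢; linear_combination -e01
        · field_simp; rw [hc] at e10 ⊢; linear_combination e10
      · refine ⟨A 1 0 / M 1 0, ?_, by field_simp, ?_⟩
        · field_simp; rw [hb] at e00 ⊢; linear_combination e00
        · field_simp; linear_combination -e10
    · refine ⟨A 0 1 / M 0 1, by field_simp, ?_, ?_⟩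
      · field_simp; linear_combination -e00
      · field_simp; linear_combination e01
  have h11 : A 1 1 = A 0 0 - β * M 0 0 + β * M 1 1 := by linear_combination -hdiag
  refine ⟨A 0 0 - β * M 0 0, β, ?_⟩
  ext i j
  fin_cases i <;> fin_cases j <;> simp [algebraMap_eq_diagonal, h01, h10, h11]

theorem commute_of_commute_of_notMem_range_algebraMap {M A B : Matrix (Fin 2) (Fin 2) K}
    (hM : M ∉ Set.range (algebraMap K _)) (hA : Commute A M) (hB : Commute B M) :
    Commute A B := by
  obtain ⟨α, β, rfl⟩ := exists_eq_algebraMap_add_smul_of_commute hM hA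
  exact (Algebra.commute_algebraMap_left α B).add_left (hB.symm.smul_left β)

end Matrix

/-- Let `K` be a field of characteristic `≠ 2`, `G` a group, `ρ : G → GL₂(K)` and
`ν : G → Kˣ` group homomorphisms, and `M ∈ GL₂(K)`.  If `ρ(g) = ν(g)·(M ρ(g) M⁻¹)` for all
`g ∈ G` and `ν(g₀) = -1` for some `g₀`, then the image under `ρ` of the kernel of `ν` is
commutative. -/
theorem image_of_ker_commutes
    (K : Type*) [Field K] (h2 : (2 : K) ≠ 0)
    (G : Type*) [Group G]
    (ρ : G →* GL (Fin 2) K) (ν : G →* Kˣ)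
    (M : GL (Fin 2) K)
    (hconj : ∀ g : G, ((ρ g : GL (Fin 2) K) : Matrix (Fin 2) (Fin 2) K)
      = (ν g : K) • ((M * ρ g * M⁻¹ : GL (Fin 2) K) : Matrix (Fin 2) (Fin 2) K))
    (g₀ : G) (hg₀ : ν g₀ = -1) :
    ∀ h₁ h₂ : G, h₁ ∈ ν.ker → h₂ ∈ ν.ker → ρ h₁ * ρ h₂ = ρ h₂ * ρ h₁ := by
  have hintertwine (g : G) : (ρ g : Matrix (Fin 2) (Fin 2) K) * M = (ν g : K) • (M * ρ g) :=
    Units.mul_eq_smul_mul_of_eq_smul_conj M (by simpa using hconj g)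
  have hker {h : G} (hh : h ∈ ν.ker) :
      Commute (ρ h : Matrix (Fin 2) (Fin 2) K) (M : Matrix (Fin 2) (Fin 2) K) :=
    show _ * _ = _ * _ by simpa [MonoidHom.mem_ker.mp hh] using hintertwine h
  have hM : (M : Matrix (Fin 2) (Fin 2) K) ∉ Set.range (algebraMap K _) :=
    notMem_range_algebraMap_of_mul_eq_neg_mul h2 M.isUnit (ρ g₀).isUnit
      (by simpa [hg₀] using hintertwine g₀)
  intro h₁ h₂ hh₁ hh₂
  exact Units.ext
    (Matrix.commute_of_commute_of_notMem_range_algebraMap hM (hker hh₁) (hker hh₂)).eq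
end
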